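/- Let Σ be an alphabet, let W be a nonempty string over Σ with smallest period p, and let a ∈ Σ be a letter such that the smallest period of a·W (the string W with the letter a prepended) is also p. Let k ≥ 1 and let U and V be strings of length k over Σ such that the last letter of U is not a, the last letter of V is not a, and U ≠ V. If U·W occurs in a string S at position i (i.e., U·W is a prefix of the suffix of S starting at index i) and V·W occurs in S at position j, then 2·|i − j| ≥ |W|. -/

import Mathlib

/-!
If `U ++ W` occurs at `i` and `V ++ W` at `j > i` with `2 (j - i) < |W|`, the two occurrences of
`W` overlap, so `e = j - i` is a period of `W` with `p + e ≤ |W|`. By the Fine–Wilf periodicity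
lemma `gcd p e` is a period as well, and minimality of `p` gives `p ∣ e`. As `a :: W` has period
`p`, the letter of `W` at index `e - 1` is then `a`; but in `S` that position carries the last
letter of `V`. For `i = j` the two occurrences would force `U = V`.
-/

/-- `p` is a period of the string `S` if `p > 0` and `S[i] = S[i + p]` for all valid `i`. -/
def IsPeriod {α : Type*} (p : ℕ) (S : List α) : Prop :=
  0 < p ∧ ∀ (i : ℕ) (h : i + p < S.length), S.get ⟨i, by omega⟩ = S.get ⟨i + p, h⟩

section

variable {α : Type*}

theorem isPeriod_iff_hasPeriod {p : ℕ} {S : List α} : IsPeriod p S ↔ 0 < p ∧ S.HasPeriod p := by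
  simp only [IsPeriod, List.hasPeriod_iff_getElem?, List.get_eq_getElem]
  refine and_congr_right fun _ => ⟨fun h i hi => ?_, fun h i hi => ?_⟩
  · rw [List.getElem?_eq_getElem (by omega), List.getElem?_eq_getElem (by omega), h i (by omega)]
  · simpa [List.getElem?_eq_getElem hi, List.getElem?_eq_getElem (Nat.lt_of_add_right_lt hi)]
      using h i (by omega)

theorem isLeast_sInf_isPeriod {S : List α} (hS : S ≠ []) :
    IsLeast {q | IsPeriod q S} (sInf {q | IsPeriod q S}) :=
  isLeast_csInf ⟨S.length, List.length_pos_iff.2 hS, fun _ _ => by omega⟩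

theorem IsLeast.dvd_of_hasPeriod {W : List α} {p e : ℕ} (hp : IsLeast {q | IsPeriod q W} p)
    (he : W.HasPeriod e) (hlen : p + e ≤ W.length) : p ∣ e := by
  have hp₀ : 0 < p := hp.1.1
  have hg : IsPeriod (p.gcd e) W :=
    isPeriod_iff_hasPeriod.2 ⟨Nat.gcd_pos_of_pos_left e hp₀,
      (isPeriod_iff_hasPeriod.1 hp.1).2.gcd he (by omega)⟩
  exact Nat.gcd_eq_left_iff_dvd.1 (le_antisymm (Nat.gcd_le_left e hp₀) (hp.2 hg))

theorem List.HasPeriod.getElem?_eq_getElem?_zero {w : List α} {p e : ℕ} (h : w.HasPeriod p)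
    (hd : p ∣ e) (he : e < w.length) : w[e]? = w[0]? := by
  rw [← h.getElem?_mod p e w he, Nat.mod_eq_zero_of_dvd hd]

theorem getElem?_add_of_prefix_drop {A S : List α} {m t : ℕ} (h : A <+: S.drop m)
    (ht : t < A.length) : S[m + t]? = A[t]? := by
  simpa [List.getElem?_eq_getElem ht] using List.prefix_iff_getElem?.1 h t ht

theorem prefix_drop_of_append_prefix_drop {A B S : List α} {i : ℕ} (h : (A ++ B) <+: S.drop i) :
    B <+: S.drop (i + A.length) := by
  obtain ⟨t, ht⟩ := h
  exact ⟨t, by rw [← List.drop_drop, ← ht]; simp⟩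

theorem List.HasPeriod.of_prefix_drop {W S : List α} {m e : ℕ} (h₁ : W <+: S.drop m)
    (h₂ : W <+: S.drop (m + e)) : W.HasPeriod e := by
  refine List.hasPeriod_iff_getElem?.2 fun t ht => ?_
  rw [← getElem?_add_of_prefix_drop h₂ (t := t) (by omega),
    ← getElem?_add_of_prefix_drop h₁ (t := t + e) (by omega), add_assoc, add_comm e]

theorem eq_of_cons_prefix_drop {W S : List α} {p m d : ℕ} {a b : α}
    (hp : IsLeast {q | IsPeriod q W} p) (ha : (a :: W).HasPeriod p)
    (h₁ : W <+: S.drop m) (h₂ : (b :: W) <+: S.drop (m + d)) (hlen : 2 * (d + 1) < W.length) :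
    b = a := by
  have hW : W.HasPeriod (d + 1) :=
    .of_prefix_drop h₁ (by simpa [add_assoc] using prefix_drop_of_append_prefix_drop (A := [b]) h₂)
  have hpd : p ≤ d + 1 := hp.2 (isPeriod_iff_hasPeriod.2 ⟨d.succ_pos, hW⟩)
  have hWa : W[d]? = some a := by
    simpa using ha.getElem?_eq_getElem?_zero (hp.dvd_of_hasPeriod hW (by omega)) (by simp; omega)
  have hSb : S[m + d]? = some b := by simpa using getElem?_add_of_prefix_drop h₂ (t := 0) (by simp)
  have hSW : S[m + d]? = W[d]? := getElem?_add_of_prefix_drop h₁ (by omega)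
  simpa [hSb, hWa] using hSW

theorem length_le_two_mul_sub_of_prefix_drop {W U V S : List α} {p i j : ℕ} {a : α}
    (hp : IsLeast {q | IsPeriod q W} p) (ha : (a :: W).HasPeriod p)
    (hUV : U.length = V.length) (hV : V ≠ []) (hVa : V.getLast? ≠ some a)
    (hi : (U ++ W) <+: S.drop i) (hj : (V ++ W) <+: S.drop j) (hij : i < j) :
    W.length ≤ 2 * (j - i) := by
  obtain ⟨V, b, rfl⟩ := V.eq_nil_or_concat.resolve_left hV
  by_contra! hlt
  refine hVa ?_
  rw [List.concat_eq_append, List.getLast?_concat]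
  refine congrArg some (eq_of_cons_prefix_drop hp ha (prefix_drop_of_append_prefix_drop hi)
    (d := j - i - 1) ?_ (by omega))
  have hb := prefix_drop_of_append_prefix_drop (A := V) (B := b :: W) (by simpa using hj)
  simp only [List.concat_eq_append, List.length_append, List.length_singleton] at hUV
  rwa [show j + V.length = i + U.length + (j - i - 1) by omega] at hb

end

/-- Let `W` be nonempty with smallest period `p`, and let `a` be a letter such
that `a :: W` also has smallest period `p`. If `U` and `V` are distinct strings of length
`k ≥ 1` neither of which ends with `a`, and `U ++ W` occurs at position `i` in `S` while
`V ++ W` occurs at position `j` in `S`, then `2·|i − j| ≥ |W|`. -/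
theorem occ_positions_far_apart {α : Type*} (W : List α) (hW : W ≠ []) (p : ℕ)
    (hp : p = sInf {q | IsPeriod q W}) (a : α)
    (ha : sInf {q | IsPeriod q (a :: W)} = p)
    (k : ℕ) (hk : 1 ≤ k) (U V : List α)
    (hU : U.length = k) (hV : V.length = k)
    (hUa : U.getLast? ≠ some a) (hVa : V.getLast? ≠ some a) (hUV : U ≠ V)
    (S : List α) (i j : ℕ)
    (hi : (U ++ W) <+: S.drop i) (hj : (V ++ W) <+: S.drop j) :
    W.length ≤ 2 * ((i : ℤ) - (j : ℤ)).natAbs := by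
  have hpW : IsLeast {q | IsPeriod q W} p := hp ▸ isLeast_sInf_isPeriod hW
  have hpa : (a :: W).HasPeriod p :=
    (isPeriod_iff_hasPeriod.1 (ha ▸ (isLeast_sInf_isPeriod (List.cons_ne_nil a W)).1)).2
  have hU₀ : U ≠ [] := by rintro rfl; simp at hU; omega
  have hV₀ : V ≠ [] := by rintro rfl; simp at hV; omega
  rcases lt_trichotomy i j with hij | rfl | hij
  · have := length_le_two_mul_sub_of_prefix_drop hpW hpa (hU.trans hV.symm) hV₀ hVa hi hj hij
    omega
  · have hlen : (U ++ W).length = (V ++ W).length := by simp [hU, hV]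
    exact absurd (List.append_cancel_right
      ((List.prefix_of_prefix_length_le hi hj hlen.le).eq_of_length hlen)) hUV
  · have := length_le_two_mul_sub_of_prefix_drop hpW hpa (hV.trans hU.symm) hU₀ hUa hj hi hij
    omega
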